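/- arXiv:2209.02113 — 3 statements merged into one kernel-verified Lean document; each statement's English description precedes it below -/
import Mathlib

section
/- Let g(t) = |t|^{q-1} t with 1 < q < 2. Then there exists C > 0 such that |g(a+b) − g(a) − g'(a) b| ≤ C |b|^q for all a, b ∈ ℝ, where g'(a) = q|a|^{q-1}. -/
/-!
Let `g(t) = |t|^{p-1} t`, so `g'(t) = p|t|^{p-1}`. By the mean value inequality, applied to
`x ↦ g x - g'(a) x` on the segment from `a` to `a + b`, the remainder `g(a+b) - g(a) - g'(a) b`
is at most `|b|` times the oscillation of `g'` on that segment. For `1 < p ≤ 2` the function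
`t ↦ t^{p-1}` is subadditive on `[0, ∞)`, hence `(p-1)`-Hölder with constant `1`, so this
oscillation is at most `p |b|^{p-1}`, and `C = p` works.
-/

open Real Set

lemma abs_rpow_sub_rpow_le {r x y : ℝ} (hr0 : 0 ≤ r) (hr1 : r ≤ 1) (hx : 0 ≤ x)
    (hy : 0 ≤ y) :
    |x ^ r - y ^ r| ≤ |x - y| ^ r := by
  wlog hyx : y ≤ x generalizing x y
  · rw [abs_sub_comm, abs_sub_comm x]
    exact this hy hx (le_of_not_ge hyx)
  have hmono : y ^ r ≤ x ^ r := rpow_le_rpow hy hyx hr0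
  have hsubadd : x ^ r ≤ (x - y) ^ r + y ^ r := by
    simpa using rpow_add_le_add_rpow (sub_nonneg.2 hyx) hy hr0 hr1
  rw [abs_of_nonneg (sub_nonneg.2 hmono), abs_of_nonneg (sub_nonneg.2 hyx)]
  linarith

lemma abs_abs_rpow_sub_abs_rpow_le {r : ℝ} (hr0 : 0 ≤ r) (hr1 : r ≤ 1) (x y : ℝ) :
    |(|x| ^ r - |y| ^ r)| ≤ |x - y| ^ r :=
  (abs_rpow_sub_rpow_le hr0 hr1 (abs_nonneg x) (abs_nonneg y)).trans
    (rpow_le_rpow (abs_nonneg _) (abs_abs_sub_abs_le_abs_sub x y) hr0)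

noncomputable def signedRpow (p t : ℝ) : ℝ := |t| ^ (p - 1) * t

lemma hasDerivAt_signedRpow_of_ne_zero (p : ℝ) {t : ℝ} (ht : t ≠ 0) :
    HasDerivAt (signedRpow p) (p * |t| ^ (p - 1)) t := by
  refine (((hasDerivAt_abs ht).rpow_const (p := p - 1) (Or.inl (abs_ne_zero.2 ht))).mul
    (hasDerivAt_id' t)).congr_deriv ?_
  rw [mul_right_comm _ _ t, mul_right_comm _ _ t, sign_mul_self, rpow_sub_one (abs_ne_zero.2 ht)]
  field_simp
  ring

lemma hasDerivAt_signedRpow_zero {p : ℝ} (hp : 1 < p) : HasDerivAt (signedRpow p) 0 0 := by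
  rw [hasDerivAt_iff_tendsto_slope_zero]
  have hcont : ContinuousAt (fun t : ℝ => |t| ^ (p - 1)) 0 :=
    continuous_abs.continuousAt.rpow_const (Or.inr (by linarith))
  have hzero : |(0 : ℝ)| ^ (p - 1) = 0 := by simp [zero_rpow (by linarith : p - 1 ≠ 0)]
  refine (hzero ▸ hcont.tendsto.mono_left nhdsWithin_le_nhds).congr' ?_
  filter_upwards [self_mem_nhdsWithin] with t (ht : t ≠ 0)
  simp only [signedRpow, zero_add, hzero, mul_zero, sub_zero, smul_eq_mul]
  field_simp

lemma hasDerivAt_signedRpow {p : ℝ} (hp : 1 < p) (t : ℝ) :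
    HasDerivAt (signedRpow p) (p * |t| ^ (p - 1)) t := by
  rcases eq_or_ne t 0 with rfl | ht
  · simpa [zero_rpow (by linarith : p - 1 ≠ 0)] using hasDerivAt_signedRpow_zero hp
  · exact hasDerivAt_signedRpow_of_ne_zero p ht

lemma abs_signedRpow_add_sub_sub_le {p : ℝ} (hp1 : 1 < p) (hp2 : p ≤ 2) (a b : ℝ) :
    |signedRpow p (a + b) - signedRpow p a - p * |a| ^ (p - 1) * b| ≤ p * |b| ^ p := by
  set f : ℝ → ℝ := fun x => signedRpow p x - p * |a| ^ (p - 1) * x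
  have hf : ∀ x, HasDerivAt f (p * |x| ^ (p - 1) - p * |a| ^ (p - 1)) x := fun x =>
    (hasDerivAt_signedRpow hp1 x).sub ((hasDerivAt_id' x).const_mul _ |>.congr_deriv (mul_one _))
  have hbound : ∀ x ∈ uIcc a (a + b),
      ‖p * |x| ^ (p - 1) - p * |a| ^ (p - 1)‖ ≤ p * |b| ^ (p - 1) := by
    intro x hx
    have hxa : |x - a| ≤ |b| := by simpa using abs_sub_left_of_mem_uIcc hx
    calc ‖p * |x| ^ (p - 1) - p * |a| ^ (p - 1)‖ = p * |(|x| ^ (p - 1) - |a| ^ (p - 1))| := by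
          rw [norm_eq_abs, ← mul_sub, abs_mul, abs_of_pos (by linarith)]
      _ ≤ p * |x - a| ^ (p - 1) := by
          gcongr; exact abs_abs_rpow_sub_abs_rpow_le (by linarith) (by linarith) x a
      _ ≤ p * |b| ^ (p - 1) := by gcongr
  have hmvt := (convex_uIcc a (a + b)).norm_image_sub_le_of_norm_hasDerivWithin_le
    (fun x _ => (hf x).hasDerivWithinAt) hbound left_mem_uIcc right_mem_uIcc
  calc |signedRpow p (a + b) - signedRpow p a - p * |a| ^ (p - 1) * b| = ‖f (a + b) - f a‖ := by
        rw [norm_eq_abs]; congr 1; ring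
    _ ≤ p * |b| ^ (p - 1) * ‖a + b - a‖ := hmvt
    _ = p * |b| ^ p := by
        rw [add_sub_cancel_left, norm_eq_abs, mul_assoc,
          ← rpow_add_one' (abs_nonneg b) (by linarith), sub_add_cancel]

/-- For `g(t) = |t|^{q-1} t` with `1 < q < 2`, there exists `C > 0` such that
`|g(a+b) − g(a) − g'(a) b| ≤ C|b|^q` for all real `a, b`, where `g'(a) = q|a|^{q-1}`. -/
theorem abs_g_sub_g_sub_deriv_le (q : ℝ) (hq1 : 1 < q) (hq2 : q < 2) :
    ∃ C > 0, ∀ a b : ℝ,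
      |(|a + b| ^ (q - 1) * (a + b) - |a| ^ (q - 1) * a - q * |a| ^ (q - 1) * b)| ≤
        C * |b| ^ q :=
  ⟨q, by linarith, abs_signedRpow_add_sub_sub_le hq1 hq2.le⟩
end

section
/- For every q > 1 and γ ∈ (0,1) there exists C > 0 such that, for all a, b ∈ ℝ, | |a+b|^q log|a+b| − |a|^q log|a| | ≤ C(|a|^{q-1-γ}|b| + |a|^{q-1+γ}|b| + |b|^{q-γ} + |b|^{q+γ}), with the convention 0^q log 0 = 0. -/
/-!
Split according to whether `|b| ≤ |a|/2`. If so, the segment from `a` to `a + b` stays at distance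
comparable to `|a|` from the origin, and the mean value theorem applies with the derivative
`q x^{q-1} log x + x^{q-1}` (for `x > 0`; the function is even); it is bounded by a multiple of
`x^{q-1-γ} + x^{q-1+γ}` because `|log x| ≤ (x^{-γ} + x^γ)/γ`. Otherwise `|a|, |a + b| ≤ 3|b|`, and
each of the two terms is bounded separately by `u^q |log u| ≤ (u^{q-γ} + u^{q+γ})/γ`, which needs
`γ ≤ q` for monotonicity in `u`.
-/

open Real Metric

noncomputable def rpowMulLog (q x : ℝ) : ℝ := |x| ^ q * log |x|

lemma rpowMulLog_neg (q x : ℝ) : rpowMulLog q (-x) = rpowMulLog q x := by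
  simp only [rpowMulLog, abs_neg]

lemma abs_log_le_rpow_neg_add_rpow_div {γ t : ℝ} (hγ : 0 < γ) (ht : 0 < t) :
    |log t| ≤ (t ^ (-γ) + t ^ γ) / γ := by
  have hle := log_le_rpow_div ht.le hγ
  have hge := log_le_rpow_div (inv_pos.2 ht).le hγ
  rw [log_inv, inv_rpow ht.le, ← rpow_neg ht.le] at hge
  have hneg : 0 ≤ t ^ (-γ) / γ := by positivity
  have hpos : 0 ≤ t ^ γ / γ := by positivity
  rw [add_div, abs_le]
  constructor <;> linarith

lemma rpow_mul_abs_log_le {p γ t : ℝ} (hγ : 0 < γ) (ht : 0 ≤ t) :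
    t ^ p * |log t| ≤ (t ^ (p - γ) + t ^ (p + γ)) / γ := by
  rcases ht.eq_or_lt with rfl | ht
  · rw [log_zero, abs_zero, mul_zero]
    positivity
  calc t ^ p * |log t| ≤ t ^ p * ((t ^ (-γ) + t ^ γ) / γ) := by
        gcongr
        exact abs_log_le_rpow_neg_add_rpow_div hγ ht
    _ = (t ^ (p - γ) + t ^ (p + γ)) / γ := by
        rw [sub_eq_add_neg, rpow_add ht, rpow_add ht]
        ring

lemma rpow_le_rpow_add_rpow_of_exponent_le_of_le {t p r s : ℝ} (ht : 0 < t) (hpr : p ≤ r)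
    (hrs : r ≤ s) : t ^ r ≤ t ^ p + t ^ s := by
  rcases le_total t 1 with h | h
  · exact (rpow_le_rpow_of_exponent_ge ht h hpr).trans
      (le_add_of_nonneg_right (rpow_nonneg ht.le s))
  · exact (rpow_le_rpow_of_exponent_le h hrs).trans
      (le_add_of_nonneg_left (rpow_nonneg ht.le p))

lemma rpow_le_rpow_add_rpow_of_le_of_le {x y z p : ℝ} (hx : 0 < x) (hxy : x ≤ y) (hyz : y ≤ z) :
    y ^ p ≤ x ^ p + z ^ p := by
  rcases le_total 0 p with h | h
  · exact (rpow_le_rpow (hx.le.trans hxy) hyz h).trans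
      (le_add_of_nonneg_left (rpow_nonneg hx.le p))
  · exact (rpow_le_rpow_of_nonpos hx hxy h).trans
      (le_add_of_nonneg_right (rpow_nonneg (hx.le.trans (hxy.trans hyz)) p))

lemma rpow_le_mul_rpow_of_abs_sub_le_half {a x : ℝ} (p : ℝ) (ha : 0 < a) (hx : |x - a| ≤ a / 2) :
    x ^ p ≤ ((1 / 2) ^ p + (3 / 2) ^ p) * a ^ p := by
  obtain ⟨hx₁, hx₂⟩ := abs_le.1 hx
  calc x ^ p ≤ (1 / 2 * a) ^ p + (3 / 2 * a) ^ p :=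
        rpow_le_rpow_add_rpow_of_le_of_le (by positivity) (by linarith) (by linarith)
    _ = ((1 / 2) ^ p + (3 / 2) ^ p) * a ^ p := by
        rw [mul_rpow (by norm_num) ha.le, mul_rpow (by norm_num) ha.le]
        ring

lemma hasDerivAt_rpowMulLog (q : ℝ) {t : ℝ} (ht : 0 < t) :
    HasDerivAt (rpowMulLog q) (q * t ^ (q - 1) * log t + t ^ (q - 1)) t := by
  have h : HasDerivAt (fun x : ℝ => x ^ q * log x) (q * t ^ (q - 1) * log t + t ^ (q - 1)) t := by
    refine ((hasDerivAt_rpow_const (Or.inl ht.ne')).mul (hasDerivAt_log ht.ne')).congr_deriv ?_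
    rw [rpow_sub ht, rpow_one]
    field_simp
  refine h.congr_of_eventuallyEq ?_
  filter_upwards [eventually_gt_nhds ht] with x hx
  rw [rpowMulLog, abs_of_pos hx]

lemma abs_rpowMulLog_deriv_le {q γ t : ℝ} (hq : 0 ≤ q) (hγ : 0 < γ) (ht : 0 < t) :
    |q * t ^ (q - 1) * log t + t ^ (q - 1)| ≤
      (q / γ + 1) * (t ^ (q - 1 - γ) + t ^ (q - 1 + γ)) := by
  calc |q * t ^ (q - 1) * log t + t ^ (q - 1)|
      ≤ q * (t ^ (q - 1) * |log t|) + t ^ (q - 1) := by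
        refine (abs_add_le _ _).trans_eq ?_
        rw [abs_mul, abs_mul, abs_of_nonneg hq, abs_of_nonneg (rpow_nonneg ht.le _)]
        ring
    _ ≤ q * ((t ^ (q - 1 - γ) + t ^ (q - 1 + γ)) / γ) + (t ^ (q - 1 - γ) + t ^ (q - 1 + γ)) := by
        gcongr
        · exact rpow_mul_abs_log_le hγ ht.le
        · exact rpow_le_rpow_add_rpow_of_exponent_le_of_le ht (by linarith) (by linarith)
    _ = (q / γ + 1) * (t ^ (q - 1 - γ) + t ^ (q - 1 + γ)) := by ring

lemma exists_abs_rpowMulLog_add_sub_le_of_pos_of_abs_le_half {q γ : ℝ} (hq : 0 ≤ q)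
    (hγ : 0 < γ) :
    ∃ C > 0, ∀ a b : ℝ, 0 < a → |b| ≤ a / 2 →
      |rpowMulLog q (a + b) - rpowMulLog q a| ≤
        C * (a ^ (q - 1 - γ) * |b| + a ^ (q - 1 + γ) * |b|) := by
  set c₁ : ℝ := (1 / 2) ^ (q - 1 - γ) + (3 / 2) ^ (q - 1 - γ)
  set c₂ : ℝ := (1 / 2) ^ (q - 1 + γ) + (3 / 2) ^ (q - 1 + γ)
  refine ⟨(q / γ + 1) * (c₁ + c₂), by positivity, fun a b ha hb => ?_⟩
  have hball : ∀ x ∈ closedBall a |b|, |x - a| ≤ a / 2 := fun x hx =>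
    (mem_closedBall_iff_norm.1 hx).trans hb
  have hball_pos : ∀ x ∈ closedBall a |b|, 0 < x := fun x hx => by
    linarith [(abs_le.1 (hball x hx)).1]
  have hderiv : ∀ x ∈ closedBall a |b|, HasDerivWithinAt (rpowMulLog q)
      (q * x ^ (q - 1) * log x + x ^ (q - 1)) (closedBall a |b|) x := fun x hx =>
    (hasDerivAt_rpowMulLog q (hball_pos x hx)).hasDerivWithinAt
  have hbound : ∀ x ∈ closedBall a |b|, ‖q * x ^ (q - 1) * log x + x ^ (q - 1)‖ ≤
      (q / γ + 1) * (c₁ + c₂) * (a ^ (q - 1 - γ) + a ^ (q - 1 + γ)) := by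
    intro x hx
    have h₁ := rpow_le_mul_rpow_of_abs_sub_le_half (q - 1 - γ) ha (hball x hx)
    have h₂ := rpow_le_mul_rpow_of_abs_sub_le_half (q - 1 + γ) ha (hball x hx)
    have hcomb : c₁ * a ^ (q - 1 - γ) + c₂ * a ^ (q - 1 + γ) ≤
        (c₁ + c₂) * (a ^ (q - 1 - γ) + a ^ (q - 1 + γ)) := by
      have hcross : 0 ≤ c₁ * a ^ (q - 1 + γ) + c₂ * a ^ (q - 1 - γ) := by positivity
      linarith
    calc ‖q * x ^ (q - 1) * log x + x ^ (q - 1)‖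
        ≤ (q / γ + 1) * (x ^ (q - 1 - γ) + x ^ (q - 1 + γ)) :=
          abs_rpowMulLog_deriv_le hq hγ (hball_pos x hx)
      _ ≤ (q / γ + 1) * (c₁ + c₂) * (a ^ (q - 1 - γ) + a ^ (q - 1 + γ)) := by
          rw [mul_assoc]
          gcongr
          linarith
  have hmem : a + b ∈ closedBall a |b| := by
    rw [mem_closedBall, dist_eq_norm, add_sub_cancel_left, Real.norm_eq_abs]
  have hmvt := (convex_closedBall a |b|).norm_image_sub_le_of_norm_hasDerivWithin_le hderiv hbound
    (mem_closedBall_self (abs_nonneg b)) hmem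
  rw [Real.norm_eq_abs, Real.norm_eq_abs, add_sub_cancel_left] at hmvt
  exact hmvt.trans_eq (by ring)

lemma exists_abs_rpowMulLog_add_sub_le_of_abs_le_half {q γ : ℝ} (hq : 0 ≤ q) (hγ : 0 < γ) :
    ∃ C > 0, ∀ a b : ℝ, |b| ≤ |a| / 2 →
      |rpowMulLog q (a + b) - rpowMulLog q a| ≤
        C * (|a| ^ (q - 1 - γ) * |b| + |a| ^ (q - 1 + γ) * |b|) := by
  obtain ⟨C, hC, hpos⟩ := exists_abs_rpowMulLog_add_sub_le_of_pos_of_abs_le_half hq hγ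
  refine ⟨C, hC, fun a b hb => ?_⟩
  rcases lt_trichotomy a 0 with ha | rfl | ha
  · rw [abs_of_neg ha] at hb ⊢
    have := hpos (-a) (-b) (by linarith) (by rwa [abs_neg])
    rwa [← neg_add, rpowMulLog_neg, rpowMulLog_neg, abs_neg] at this
  · obtain rfl : b = 0 := abs_nonpos_iff.1 (by simpa using hb)
    simp
  · rw [abs_of_pos ha] at hb ⊢
    exact hpos a b ha hb

lemma abs_rpowMulLog_le_of_abs_le {q γ r x : ℝ} (hγ : 0 < γ) (hγq : γ ≤ q) (hx : |x| ≤ r) :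
    |rpowMulLog q x| ≤ (r ^ (q - γ) + r ^ (q + γ)) / γ := by
  calc |rpowMulLog q x| = |x| ^ q * |log (|x|)| := by
        rw [rpowMulLog, abs_mul, abs_of_nonneg (rpow_nonneg (abs_nonneg x) q)]
    _ ≤ (|x| ^ (q - γ) + |x| ^ (q + γ)) / γ := rpow_mul_abs_log_le hγ (abs_nonneg x)
    _ ≤ (r ^ (q - γ) + r ^ (q + γ)) / γ := by
        gcongr
        linarith

lemma exists_abs_rpowMulLog_add_sub_le_of_abs_le_two_mul {q γ : ℝ} (hγ : 0 < γ) (hγq : γ ≤ q) :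
    ∃ C > 0, ∀ a b : ℝ, |a| ≤ 2 * |b| →
      |rpowMulLog q (a + b) - rpowMulLog q a| ≤ C * (|b| ^ (q - γ) + |b| ^ (q + γ)) := by
  refine ⟨2 * 3 ^ (q + γ) / γ, by positivity, fun a b hab => ?_⟩
  have h3b : (3 * |b|) ^ (q - γ) + (3 * |b|) ^ (q + γ) ≤
      3 ^ (q + γ) * (|b| ^ (q - γ) + |b| ^ (q + γ)) := by
    rw [mul_rpow (by norm_num) (abs_nonneg b), mul_rpow (by norm_num) (abs_nonneg b), mul_add]
    gcongr
    · norm_num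
    · linarith
  have hsum : |a + b| ≤ 3 * |b| := by linarith [abs_add_le a b]
  have hsum := abs_rpowMulLog_le_of_abs_le hγ hγq hsum
  have ha := abs_rpowMulLog_le_of_abs_le hγ hγq (by linarith [abs_nonneg b] : |a| ≤ 3 * |b|)
  calc |rpowMulLog q (a + b) - rpowMulLog q a|
      ≤ |rpowMulLog q (a + b)| + |rpowMulLog q a| := abs_sub _ _
    _ ≤ 2 * (((3 * |b|) ^ (q - γ) + (3 * |b|) ^ (q + γ)) / γ) := by linarith
    _ ≤ 2 * (3 ^ (q + γ) * (|b| ^ (q - γ) + |b| ^ (q + γ)) / γ) := by gcongr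
    _ = 2 * 3 ^ (q + γ) / γ * (|b| ^ (q - γ) + |b| ^ (q + γ)) := by ring

/-- For every `q > 1` and `γ ∈ (0,1)` there exists `C > 0` such that, for all real `a, b`,
`| |a+b|^q log|a+b| − |a|^q log|a| | ≤ C(|a|^{q-1-γ}|b| + |a|^{q-1+γ}|b| + |b|^{q-γ} + |b|^{q+γ})`
(with the convention `0^q log 0 = 0`, which holds automatically since `Real.log 0 = 0`). -/
theorem abs_rpow_mul_log_sub_le (q γ : ℝ) (hq : 1 < q) (hγ1 : 0 < γ) (hγ2 : γ < 1) :
    ∃ C > 0, ∀ a b : ℝ,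
      |(|a + b| ^ q * Real.log |a + b| - |a| ^ q * Real.log |a|)| ≤
        C * (|a| ^ (q - 1 - γ) * |b| + |a| ^ (q - 1 + γ) * |b| +
          |b| ^ (q - γ) + |b| ^ (q + γ)) := by
  obtain ⟨C₁, hC₁, hnear⟩ := exists_abs_rpowMulLog_add_sub_le_of_abs_le_half (q := q)
    (by linarith) hγ1
  obtain ⟨C₂, hC₂, hfar⟩ := exists_abs_rpowMulLog_add_sub_le_of_abs_le_two_mul (q := q)
    hγ1 (by linarith)
  refine ⟨C₁ + C₂, by positivity, fun a b => ?_⟩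
  have hT₁ : 0 ≤ |a| ^ (q - 1 - γ) * |b| + |a| ^ (q - 1 + γ) * |b| := by positivity
  have hT₂ : 0 ≤ |b| ^ (q - γ) + |b| ^ (q + γ) := by positivity
  rcases le_total |b| (|a| / 2) with hb | hb
  · calc _ ≤ C₁ * (|a| ^ (q - 1 - γ) * |b| + |a| ^ (q - 1 + γ) * |b|) := hnear a b hb
      _ ≤ _ := mul_le_mul (by linarith) (by linarith) hT₁ (by positivity)
  · calc _ ≤ C₂ * (|b| ^ (q - γ) + |b| ^ (q + γ)) := hfar a b (by linarith)
      _ ≤ _ := mul_le_mul (by linarith) (by linarith) hT₂ (by positivity)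
end

section
/- Let n ≥ 4 and let φ_0(x) = −(α_n/ω_n) ∫_{ℝ^{n-1}} |y|² / ((1+|y|²)^{n/2} |x − (y,0)|^{n-2}) dy for x ∈ ℝ^n_+. Then there exists C > 0 such that |φ_0(x)| ≤ C/(1+|x|)^{n-3} for all x ∈ ℝ^n_+. -/
open MeasureTheory

/-- `α_n = (n(n-2))^{(n-2)/4}`. -/
noncomputable def alphaN (n : ℕ) : ℝ :=
  ((n : ℝ) * ((n : ℝ) - 2)) ^ (((n : ℝ) - 2) / 4)

/-- The embedding of `ℝ^{n-1}` into `ℝⁿ` as the hyperplane `∂ℝⁿ₊ = {x_n = 0}`. -/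
noncomputable def emb (n : ℕ) (y : EuclideanSpace ℝ (Fin (n - 1))) :
    EuclideanSpace ℝ (Fin n) :=
  WithLp.toLp 2 (fun i : Fin n => if h : (i : ℕ) < n - 1 then y ⟨i, h⟩ else 0)

/-- `φ₀(x) = −(α_n/ω_n) ∫_{ℝ^{n-1}} |y|²/((1+|y|²)^{n/2} |x−(y,0)|^{n-2}) dy`,
where `ω_n` is the surface measure of the unit sphere of `ℝⁿ`. -/
noncomputable def phi0 (n : ℕ) (ωn : ℝ) (x : EuclideanSpace ℝ (Fin n)) : ℝ :=
  -(alphaN n / ωn) * ∫ y : EuclideanSpace ℝ (Fin (n - 1)),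
    ‖y‖ ^ 2 / ((1 + ‖y‖ ^ 2) ^ ((n : ℝ) / 2) * ‖x - emb n y‖ ^ ((n : ℝ) - 2))

/-! Write `p` for the projection of `x` to `∂ℝⁿ₊` and `s = 1 + |x|`. The distance `|x - (y,0)|`
dominates both `|p - y|` and `||x| - |y||`, and the weight `|y|²/(1+|y|²)^{n/2}` is at most
`min(|y|², |y|^{2-n})`. On `|y| > 2s` the integrand is therefore `O(|y|^{4-2n})`, whose tail
integral over `ℝ^{n-1}` is `O(s^{3-n})` because `n > 3`. On `|y| ≤ 2s` the singularity
`|p - y|^{2-n}` is integrable in `ℝ^{n-1}`: for `|x| ≤ 1` this gives a bound `O(1)`, and for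
`|x| ≥ 1` one splits again at `|y| = s/4`, using `|x - (y,0)| ≥ s/4` on the inner ball and
`|y|^{2-n} ≤ (s/4)^{2-n}` outside it; both pieces are `O(s^{3-n})`. The radial integrals are
computed in polar coordinates. -/

open Set Metric Module
open scoped ENNReal

theorem lintegral_Ioc_rpow {e : ℝ} (he : -1 < e) {ρ : ℝ} (hρ : 0 ≤ ρ) :
    ∫⁻ t in Ioc 0 ρ, ENNReal.ofReal (t ^ e) = ENNReal.ofReal (ρ ^ (e + 1) / (e + 1)) := by
  rw [← ofReal_integral_eq_lintegral_ofReal, ← intervalIntegral.integral_of_le hρ,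
    integral_rpow (Or.inl he), Real.zero_rpow (by linarith), sub_zero]
  · exact (intervalIntegrable_iff_integrableOn_Ioc_of_le hρ).1
      (intervalIntegral.intervalIntegrable_rpow' he)
  · filter_upwards [ae_restrict_mem measurableSet_Ioc] with t ht
    exact Real.rpow_nonneg ht.1.le e

theorem lintegral_Ioi_rpow {e : ℝ} (he : e < -1) {ρ : ℝ} (hρ : 0 < ρ) :
    ∫⁻ t in Ioi ρ, ENNReal.ofReal (t ^ e) = ENNReal.ofReal (-ρ ^ (e + 1) / (e + 1)) := by
  rw [← ofReal_integral_eq_lintegral_ofReal (integrableOn_Ioi_rpow_of_lt he hρ),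
    integral_Ioi_rpow_of_lt he hρ]
  filter_upwards [ae_restrict_mem measurableSet_Ioi] with t ht
  exact Real.rpow_nonneg (hρ.trans ht).le e

section Radial

variable {E : Type*} [NormedAddCommGroup E] [NormedSpace ℝ E] [MeasurableSpace E] [BorelSpace E]
  [FiniteDimensional ℝ E] [Nontrivial E] (μ : Measure E) [μ.IsAddHaarMeasure]

theorem lintegral_fun_norm_addHaar {g : ℝ → ℝ≥0∞} (hg : Measurable g) :
    ∫⁻ x, g ‖x‖ ∂μ =
      μ.toSphere univ * ∫⁻ t in Ioi 0, ENNReal.ofReal (t ^ (finrank ℝ E - 1)) * g t := by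
  have hcompl : ∫⁻ x, g ‖x‖ ∂μ = ∫⁻ x : ({0}ᶜ : Set E), g ‖(x : E)‖ ∂(μ.comap (↑)) := by
    rw [lintegral_subtype_comap (measurableSet_singleton (0 : E)).compl (fun x => g ‖x‖),
      restrict_compl_singleton]
  have hpolar := (μ.measurePreserving_homeomorphUnitSphereProd).lintegral_comp
    (f := fun p : sphere (0 : E) 1 × Ioi (0 : ℝ) => g p.2)
    (hg.comp (measurable_subtype_coe.comp measurable_snd))
  simp only [homeomorphUnitSphereProd_apply_snd_coe] at hpolar
  have hradial : ∫⁻ y : Ioi (0 : ℝ), g y ∂(Measure.volumeIoiPow (finrank ℝ E - 1))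
      = ∫⁻ t in Ioi 0, ENNReal.ofReal (t ^ (finrank ℝ E - 1)) * g t := by
    rw [Measure.volumeIoiPow, lintegral_withDensity_eq_lintegral_mul _
      (g := fun y : Ioi (0 : ℝ) => g y) (measurable_subtype_coe.pow_const _).ennreal_ofReal
      (hg.comp measurable_subtype_coe)]
    exact lintegral_subtype_comap measurableSet_Ioi
      (fun t => ENNReal.ofReal (t ^ (finrank ℝ E - 1)) * g t)
  rw [hcompl, hpolar, lintegral_prod (fun p : sphere (0 : E) 1 × Ioi (0 : ℝ) => g p.2)
    (hg.comp (measurable_subtype_coe.comp measurable_snd)).aemeasurable]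
  simp [hradial, lintegral_const, mul_comm]

theorem setLIntegral_norm_preimage_rpow {S : Set ℝ} (hS : MeasurableSet S) (c : ℝ) :
    ∫⁻ x in norm ⁻¹' S, ENNReal.ofReal (‖x‖ ^ c) ∂μ =
      μ.toSphere univ * ∫⁻ t in S ∩ Ioi 0, ENNReal.ofReal (t ^ (c + finrank ℝ E - 1)) := by
  have hd : 1 ≤ finrank ℝ E := finrank_pos
  have hcomp : ∀ x : E, (norm ⁻¹' S).indicator (fun x => ENNReal.ofReal (‖x‖ ^ c)) x =
      S.indicator (fun t => ENNReal.ofReal (t ^ c)) ‖x‖ := fun _ =>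
      indicator_comp_right (g := fun t : ℝ => ENNReal.ofReal (t ^ c)) (fun x : E => ‖x‖)
  rw [← lintegral_indicator (measurable_norm hS), ← setLIntegral_indicator hS,
    lintegral_congr hcomp,
    lintegral_fun_norm_addHaar μ ((Measurable.ennreal_ofReal (by fun_prop)).indicator hS)]
  congr 1
  refine setLIntegral_congr_fun measurableSet_Ioi fun t (ht : 0 < t) => ?_
  by_cases htS : t ∈ S
  · rw [indicator_of_mem htS, indicator_of_mem htS, ← ENNReal.ofReal_mul (by positivity),
      ← Real.rpow_natCast, ← Real.rpow_add ht, Nat.cast_sub hd, Nat.cast_one, add_comm,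
      add_sub_assoc]
  · rw [indicator_of_notMem htS, indicator_of_notMem htS, mul_zero]

theorem setLIntegral_closedBall_norm_rpow {c : ℝ} (hc : -(finrank ℝ E : ℝ) < c) {ρ : ℝ}
    (hρ : 0 ≤ ρ) :
    ∫⁻ x in closedBall 0 ρ, ENNReal.ofReal (‖x‖ ^ c) ∂μ =
      μ.toSphere univ * ENNReal.ofReal (ρ ^ (c + finrank ℝ E) / (c + finrank ℝ E)) := by
  have hball : closedBall (0 : E) ρ = norm ⁻¹' Iic ρ := by ext; simp
  rw [hball, setLIntegral_norm_preimage_rpow μ measurableSet_Iic, Iic_inter_Ioi,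
    lintegral_Ioc_rpow (by linarith) hρ, sub_add_cancel]

theorem setLIntegral_compl_closedBall_norm_rpow {c : ℝ} (hc : c < -(finrank ℝ E : ℝ)) {ρ : ℝ}
    (hρ : 0 < ρ) :
    ∫⁻ x in (closedBall 0 ρ)ᶜ, ENNReal.ofReal (‖x‖ ^ c) ∂μ =
      μ.toSphere univ * ENNReal.ofReal (ρ ^ (c + finrank ℝ E) / -(c + finrank ℝ E)) := by
  have hball : (closedBall (0 : E) ρ)ᶜ = norm ⁻¹' Ioi ρ := by ext; simp
  rw [hball, setLIntegral_norm_preimage_rpow μ measurableSet_Ioi,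
    inter_eq_left.2 (Ioi_subset_Ioi hρ.le), lintegral_Ioi_rpow (by linarith) hρ,
    sub_add_cancel, neg_div, div_neg]

theorem setLIntegral_closedBall_norm_sub_rpow_le {c : ℝ} (hc : -(finrank ℝ E : ℝ) < c) {R : ℝ}
    (hR : 0 ≤ R) (p : E) :
    ∫⁻ y in closedBall 0 R, ENNReal.ofReal (‖y - p‖ ^ c) ∂μ ≤
      μ.toSphere univ * ENNReal.ofReal ((R + ‖p‖) ^ (c + finrank ℝ E) / (c + finrank ℝ E)) := by
  let g : E → ℝ≥0∞ := (closedBall 0 (R + ‖p‖)).indicator fun z => ENNReal.ofReal (‖z‖ ^ c)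
  calc ∫⁻ y in closedBall 0 R, ENNReal.ofReal (‖y - p‖ ^ c) ∂μ
      ≤ ∫⁻ y in closedBall 0 R, g (y - p) ∂μ := by
        refine setLIntegral_mono' measurableSet_closedBall fun y hy => ?_
        have : ‖y - p‖ ≤ R + ‖p‖ :=
          (norm_sub_le y p).trans (by gcongr; exact mem_closedBall_zero_iff.1 hy)
        exact (indicator_of_mem (mem_closedBall_zero_iff.2 this)
          fun z : E => ENNReal.ofReal (‖z‖ ^ c)).ge
    _ ≤ ∫⁻ y, g (y - p) ∂μ := setLIntegral_le_lintegral _ _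
    _ = _ := by
        rw [lintegral_sub_right_eq_self, lintegral_indicator measurableSet_closedBall,
          setLIntegral_closedBall_norm_rpow μ hc (by positivity)]

end Radial

theorem setLIntegral_ofReal_le_const_mul {α : Type*} [MeasurableSpace α] {μ : Measure α}
    {s : Set α} (hs : MeasurableSet s) {f g : α → ℝ} {a : ℝ} (ha : 0 ≤ a)
    (hfg : ∀ᵐ x ∂μ, x ∈ s → f x ≤ a * g x) :
    ∫⁻ x in s, ENNReal.ofReal (f x) ∂μ ≤
      ENNReal.ofReal a * ∫⁻ x in s, ENNReal.ofReal (g x) ∂μ := by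
  rw [← lintegral_const_mul' _ _ ENNReal.ofReal_ne_top]
  refine setLIntegral_mono_ae' hs (hfg.mono fun x hx hxs => ?_)
  rw [← ENNReal.ofReal_mul ha]
  exact ENNReal.ofReal_le_ofReal (hx hxs)

theorem sq_div_one_add_sq_rpow_le {a s : ℝ} (ha : 0 ≤ a) (hs : 0 ≤ s) :
    s ^ 2 / (1 + s ^ 2) ^ (a / 2) ≤ s ^ (2 - a) := by
  rcases hs.eq_or_lt with rfl | hs
  · rw [zero_pow two_ne_zero, zero_div]
    positivity
  calc s ^ 2 / (1 + s ^ 2) ^ (a / 2) ≤ s ^ 2 / s ^ a := by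
        gcongr
        calc s ^ a = (s ^ 2) ^ (a / 2) := by
              rw [← Real.rpow_natCast, ← Real.rpow_mul hs.le]; ring_nf
          _ ≤ (1 + s ^ 2) ^ (a / 2) := by gcongr; linarith
    _ = s ^ (2 - a) := by rw [Real.rpow_sub hs, Real.rpow_two]

namespace Phi0

variable {n : ℕ}

noncomputable def proj (n : ℕ) (x : EuclideanSpace ℝ (Fin n)) :
    EuclideanSpace ℝ (Fin (n - 1)) :=
  WithLp.toLp 2 fun j => x (Fin.castLE (Nat.sub_le n 1) j)

theorem norm_emb (y : EuclideanSpace ℝ (Fin (n - 1))) : ‖emb n y‖ = ‖y‖ := by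
  simp only [EuclideanSpace.norm_eq]
  congr 1
  refine (Fintype.sum_of_injective (Fin.castLE (Nat.sub_le n 1)) (Fin.castLE_injective _) _ _
    (fun i hi => ?_) fun j => ?_).symm
  · have : ¬ (i : ℕ) < n - 1 := fun h => hi ⟨⟨i, h⟩, rfl⟩
    simp [emb, this]
  · simp [emb]

theorem norm_proj_le (x : EuclideanSpace ℝ (Fin n)) : ‖proj n x‖ ≤ ‖x‖ := by
  simp only [EuclideanSpace.norm_eq]
  gcongr
  calc ∑ j, ‖proj n x j‖ ^ 2
        = ∑ i ∈ Finset.univ.map (Fin.castLEEmb (Nat.sub_le n 1)), ‖x i‖ ^ 2 := by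
          rw [Finset.sum_map]; rfl
    _ ≤ _ := Finset.sum_le_univ_sum_of_nonneg fun i => by positivity

theorem norm_proj_sub_le (x : EuclideanSpace ℝ (Fin n)) (y : EuclideanSpace ℝ (Fin (n - 1))) :
    ‖proj n x - y‖ ≤ ‖x - emb n y‖ := by
  have : proj n x - y = proj n (x - emb n y) := by
    ext j
    simp [proj, emb]
  exact this ▸ norm_proj_le _

theorem cast_finrank_eq (hn : 1 ≤ n) :
    (finrank ℝ (EuclideanSpace ℝ (Fin (n - 1))) : ℝ) = n - 1 := by
  rw [finrank_euclideanSpace_fin, Nat.cast_sub hn, Nat.cast_one]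

theorem nontrivial_of_two_le (hn : 2 ≤ n) : Nontrivial (EuclideanSpace ℝ (Fin (n - 1))) :=
  have : Nonempty (Fin (n - 1)) := ⟨⟨0, by omega⟩⟩
  inferInstance

noncomputable def kernel (n : ℕ) (x : EuclideanSpace ℝ (Fin n))
    (y : EuclideanSpace ℝ (Fin (n - 1))) : ℝ :=
  ‖y‖ ^ 2 / ((1 + ‖y‖ ^ 2) ^ ((n : ℝ) / 2) * ‖x - emb n y‖ ^ ((n : ℝ) - 2))

theorem kernel_nonneg (x : EuclideanSpace ℝ (Fin n)) (y : EuclideanSpace ℝ (Fin (n - 1))) :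
    0 ≤ kernel n x y := by
  unfold kernel; positivity

theorem kernel_le_mul_rpow (hn : 2 ≤ n) {x : EuclideanSpace ℝ (Fin n)}
    {y : EuclideanSpace ℝ (Fin (n - 1))} {t : ℝ} (ht : 0 < t) (htD : t ≤ ‖x - emb n y‖) :
    kernel n x y ≤ ‖y‖ ^ 2 / (1 + ‖y‖ ^ 2) ^ ((n : ℝ) / 2) * t ^ (2 - (n : ℝ)) := by
  have hn' : (0 : ℝ) ≤ n - 2 := by rw [sub_nonneg]; exact_mod_cast hn
  rw [kernel, ← div_div, show 2 - (n : ℝ) = -(n - 2) by ring, Real.rpow_neg ht.le,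
    ← div_eq_mul_inv]
  gcongr

theorem kernel_le_rpow_mul_rpow (hn : 2 ≤ n) {x : EuclideanSpace ℝ (Fin n)}
    {y : EuclideanSpace ℝ (Fin (n - 1))} {t : ℝ} (ht : 0 < t) (htD : t ≤ ‖x - emb n y‖) :
    kernel n x y ≤ ‖y‖ ^ (2 - (n : ℝ)) * t ^ (2 - (n : ℝ)) :=
  (kernel_le_mul_rpow hn ht htD).trans <| by
    gcongr; exact sq_div_one_add_sq_rpow_le (Nat.cast_nonneg n) (norm_nonneg y)

variable (x : EuclideanSpace ℝ (Fin n))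

theorem setLIntegral_closedBall_kernel_le (hn : 2 ≤ n) {R : ℝ} (hR : 0 ≤ R) :
    ∫⁻ y in closedBall 0 R, ENNReal.ofReal (kernel n x y) ≤
      (volume : Measure (EuclideanSpace ℝ (Fin (n - 1)))).toSphere univ *
        ENNReal.ofReal (R ^ 2 * (R + ‖x‖)) := by
  have := nontrivial_of_two_le hn
  have hball := setLIntegral_closedBall_norm_sub_rpow_le volume (c := 2 - n)
    (by rw [cast_finrank_eq (by omega)]; linarith) hR (proj n x)
  rw [cast_finrank_eq (by omega), show 2 - (n : ℝ) + (n - 1) = 1 by ring, Real.rpow_one,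
    div_one] at hball
  have hpt : ∀ᵐ y ∂volume, y ∈ closedBall (0 : EuclideanSpace ℝ (Fin (n - 1))) R →
      kernel n x y ≤ R ^ 2 * ‖y - proj n x‖ ^ (2 - (n : ℝ)) := by
    filter_upwards [Measure.ae_ne volume (proj n x)] with y hy hyR
    calc kernel n x y
        ≤ ‖y‖ ^ 2 / (1 + ‖y‖ ^ 2) ^ ((n : ℝ) / 2) * ‖proj n x - y‖ ^ (2 - (n : ℝ)) :=
          kernel_le_mul_rpow hn (norm_sub_pos_iff.2 hy.symm) (norm_proj_sub_le x y)
      _ ≤ R ^ 2 * ‖y - proj n x‖ ^ (2 - (n : ℝ)) := by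
          rw [norm_sub_rev]
          gcongr
          refine (div_le_self (sq_nonneg _) (Real.one_le_rpow ?_ (by positivity))).trans ?_
          · linarith [sq_nonneg ‖y‖]
          · gcongr; exact mem_closedBall_zero_iff.1 hyR
  calc _ ≤ ENNReal.ofReal (R ^ 2) * ∫⁻ y in closedBall 0 R,
          ENNReal.ofReal (‖y - proj n x‖ ^ (2 - (n : ℝ))) :=
        setLIntegral_ofReal_le_const_mul measurableSet_closedBall (by positivity) hpt
    _ ≤ ENNReal.ofReal (R ^ 2) * ((volume : Measure (EuclideanSpace ℝ (Fin (n - 1)))).toSphere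
          univ * ENNReal.ofReal (R + ‖proj n x‖)) := by gcongr
    _ ≤ _ := by
        rw [mul_left_comm, ← ENNReal.ofReal_mul (by positivity)]
        gcongr
        exact norm_proj_le x

theorem setLIntegral_closedBall_kernel_le_of_lt (hn : 2 ≤ n) {ρ : ℝ} (hρ : 0 ≤ ρ)
    (hρx : ρ < ‖x‖) :
    ∫⁻ y in closedBall 0 ρ, ENNReal.ofReal (kernel n x y) ≤
      (volume : Measure (EuclideanSpace ℝ (Fin (n - 1)))).toSphere univ *
        ENNReal.ofReal ((‖x‖ - ρ) ^ (2 - (n : ℝ)) * ρ) := by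
  have := nontrivial_of_two_le hn
  have hball := setLIntegral_closedBall_norm_rpow
    (volume : Measure (EuclideanSpace ℝ (Fin (n - 1)))) (c := 2 - n)
    (by rw [cast_finrank_eq (by omega)]; linarith) hρ
  rw [cast_finrank_eq (by omega), show 2 - (n : ℝ) + (n - 1) = 1 by ring, Real.rpow_one,
    div_one] at hball
  have hpt : ∀ᵐ y ∂volume, y ∈ closedBall (0 : EuclideanSpace ℝ (Fin (n - 1))) ρ →
      kernel n x y ≤ (‖x‖ - ρ) ^ (2 - (n : ℝ)) * ‖y‖ ^ (2 - (n : ℝ)) := by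
    refine ae_of_all _ fun y hy => ?_
    have hD : ‖x‖ - ρ ≤ ‖x - emb n y‖ := by
      have := norm_sub_norm_le x (emb n y)
      rw [norm_emb] at this
      linarith [mem_closedBall_zero_iff.1 hy]
    rw [mul_comm]
    exact kernel_le_rpow_mul_rpow hn (by linarith) hD
  calc _ ≤ _ := setLIntegral_ofReal_le_const_mul measurableSet_closedBall
        (Real.rpow_nonneg (by linarith) _) hpt
    _ = _ := by
        rw [hball, mul_left_comm, ← ENNReal.ofReal_mul (Real.rpow_nonneg (by linarith) _)]

theorem setLIntegral_closedBall_diff_kernel_le (hn : 2 ≤ n) {ρ R : ℝ} (hρ : 0 < ρ)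
    (hR : 0 ≤ R) :
    ∫⁻ y in closedBall 0 R \ closedBall 0 ρ, ENNReal.ofReal (kernel n x y) ≤
      (volume : Measure (EuclideanSpace ℝ (Fin (n - 1)))).toSphere univ *
        ENNReal.ofReal (ρ ^ (2 - (n : ℝ)) * (R + ‖x‖)) := by
  have := nontrivial_of_two_le hn
  have hball := setLIntegral_closedBall_norm_sub_rpow_le volume (c := 2 - n)
    (by rw [cast_finrank_eq (by omega)]; linarith) hR (proj n x)
  rw [cast_finrank_eq (by omega), show 2 - (n : ℝ) + (n - 1) = 1 by ring, Real.rpow_one,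
    div_one] at hball
  have hpt : ∀ᵐ y ∂volume,
      y ∈ closedBall (0 : EuclideanSpace ℝ (Fin (n - 1))) R \ closedBall 0 ρ →
      kernel n x y ≤ ρ ^ (2 - (n : ℝ)) * ‖y - proj n x‖ ^ (2 - (n : ℝ)) := by
    filter_upwards [Measure.ae_ne volume (proj n x)] with y hy hyR
    have hρy : ρ ≤ ‖y‖ := (not_le.1 fun h => hyR.2 (mem_closedBall_zero_iff.2 h)).le
    calc kernel n x y ≤ ‖y‖ ^ (2 - (n : ℝ)) * ‖proj n x - y‖ ^ (2 - (n : ℝ)) :=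
          kernel_le_rpow_mul_rpow hn (norm_sub_pos_iff.2 hy.symm) (norm_proj_sub_le x y)
      _ ≤ _ := by
          rw [norm_sub_rev]
          gcongr ?_ * _
          exact Real.rpow_le_rpow_of_nonpos hρ hρy (by rw [sub_nonpos]; exact_mod_cast hn)
  calc _ ≤ ENNReal.ofReal (ρ ^ (2 - (n : ℝ))) * ∫⁻ y in closedBall 0 R \ closedBall 0 ρ,
          ENNReal.ofReal (‖y - proj n x‖ ^ (2 - (n : ℝ))) :=
        setLIntegral_ofReal_le_const_mul (measurableSet_closedBall.diff measurableSet_closedBall)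
          (by positivity) hpt
    _ ≤ ENNReal.ofReal (ρ ^ (2 - (n : ℝ))) *
          ((volume : Measure (EuclideanSpace ℝ (Fin (n - 1)))).toSphere univ *
            ENNReal.ofReal (R + ‖proj n x‖)) := by
        gcongr
        exact (lintegral_mono_set sdiff_subset).trans hball
    _ ≤ _ := by
        rw [mul_left_comm, ← ENNReal.ofReal_mul (by positivity)]
        gcongr
        exact norm_proj_le x

theorem setLIntegral_compl_closedBall_kernel_le (hn : 4 ≤ n) {R : ℝ} (hR : 0 < R)
    (hxR : 2 * ‖x‖ ≤ R) :
    ∫⁻ y in (closedBall 0 R)ᶜ, ENNReal.ofReal (kernel n x y) ≤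
      (volume : Measure (EuclideanSpace ℝ (Fin (n - 1)))).toSphere univ *
        ENNReal.ofReal (2 ^ ((n : ℝ) - 2) * (R ^ (3 - (n : ℝ)) / (n - 3))) := by
  have := nontrivial_of_two_le (by omega : 2 ≤ n)
  have hn' : (4 : ℝ) ≤ n := by exact_mod_cast hn
  have htail := setLIntegral_compl_closedBall_norm_rpow
    (volume : Measure (EuclideanSpace ℝ (Fin (n - 1)))) (c := 4 - 2 * n)
    (by rw [cast_finrank_eq (by omega)]; linarith) hR
  rw [cast_finrank_eq (by omega), show 4 - 2 * (n : ℝ) + (n - 1) = 3 - n by ring,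
    neg_sub] at htail
  have hpt : ∀ᵐ y ∂volume, y ∈ (closedBall (0 : EuclideanSpace ℝ (Fin (n - 1))) R)ᶜ →
      kernel n x y ≤ 2 ^ ((n : ℝ) - 2) * ‖y‖ ^ (4 - 2 * (n : ℝ)) := by
    refine ae_of_all _ fun y hy => ?_
    have hRy : R < ‖y‖ := not_le.1 fun h => hy (mem_closedBall_zero_iff.2 h)
    have hy0 : 0 < ‖y‖ := hR.trans hRy
    have hD : ‖y‖ / 2 ≤ ‖x - emb n y‖ := by
      have := norm_sub_norm_le (emb n y) x
      rw [norm_emb, norm_sub_rev] at this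
      linarith
    calc kernel n x y ≤ ‖y‖ ^ (2 - (n : ℝ)) * (‖y‖ / 2) ^ (2 - (n : ℝ)) :=
          kernel_le_rpow_mul_rpow (by omega) (by positivity) hD
      _ = _ := by
          rw [Real.div_rpow hy0.le zero_le_two, div_eq_mul_inv, ← Real.rpow_neg zero_le_two,
            mul_left_comm, ← mul_assoc, ← Real.rpow_add hy0, neg_sub]
          ring_nf
  calc _ ≤ _ := setLIntegral_ofReal_le_const_mul measurableSet_closedBall.compl
        (by positivity) hpt
    _ = _ := by rw [htail, mul_left_comm, ← ENNReal.ofReal_mul (by positivity)]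

-- `96` dominates both `(2s)²(2s + |x|) ≤ 80` for `|x| ≤ 1` and the factor `13` for `|x| ≥ 1`.
theorem setLIntegral_closedBall_kernel_le_of_norm_le_one (hn : 4 ≤ n) (hx : ‖x‖ ≤ 1) :
    ∫⁻ y in closedBall 0 (2 * (1 + ‖x‖)), ENNReal.ofReal (kernel n x y) ≤
      (volume : Measure (EuclideanSpace ℝ (Fin (n - 1)))).toSphere univ *
        ENNReal.ofReal (96 * ((1 + ‖x‖) / 4) ^ (3 - (n : ℝ))) := by
  refine (setLIntegral_closedBall_kernel_le x (by omega) (by positivity)).trans ?_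
  have hn' : (4 : ℝ) ≤ n := by exact_mod_cast hn
  have hpow : 1 ≤ ((1 + ‖x‖) / 4) ^ (3 - (n : ℝ)) :=
    Real.one_le_rpow_of_pos_of_le_one_of_nonpos (by positivity) (by linarith) (by linarith)
  have hx0 := norm_nonneg x
  have hcube : (2 * (1 + ‖x‖)) ^ 2 * (2 * (1 + ‖x‖) + ‖x‖) ≤ 96 := by nlinarith
  gcongr _ * ENNReal.ofReal ?_
  nlinarith

theorem setLIntegral_closedBall_kernel_le_of_one_le_norm (hn : 4 ≤ n) (hx : 1 ≤ ‖x‖) :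
    ∫⁻ y in closedBall 0 (2 * (1 + ‖x‖)), ENNReal.ofReal (kernel n x y) ≤
      (volume : Measure (EuclideanSpace ℝ (Fin (n - 1)))).toSphere univ *
        ENNReal.ofReal (96 * ((1 + ‖x‖) / 4) ^ (3 - (n : ℝ))) := by
  set s := 1 + ‖x‖
  have hs : 0 < s / 4 := by positivity
  have hn' : (4 : ℝ) ≤ n := by exact_mod_cast hn
  set P := (s / 4) ^ (2 - (n : ℝ))
  have hP : 0 ≤ P := by positivity
  have hPs : P * (s / 4) = (s / 4) ^ (3 - (n : ℝ)) := by
    rw [← Real.rpow_add_one hs.ne']; ring_nf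
  have hinner : (‖x‖ - s / 4) ^ (2 - (n : ℝ)) * (s / 4) ≤ P * (s / 4) := by
    gcongr
    exact Real.rpow_le_rpow_of_nonpos hs (by linarith) (by linarith)
  have hmiddle : P * (2 * s + ‖x‖) ≤ 12 * (P * (s / 4)) := by nlinarith
  calc _ ≤ ∫⁻ y in closedBall 0 (s / 4) ∪ (closedBall 0 (2 * s) \ closedBall 0 (s / 4)),
          ENNReal.ofReal (kernel n x y) :=
        lintegral_mono_set (by rw [union_sdiff_self]; exact subset_union_right)
    _ ≤ _ := lintegral_union_le _ _ _
    _ ≤ _ := add_le_add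
        (setLIntegral_closedBall_kernel_le_of_lt x (by omega) hs.le (by linarith))
        (setLIntegral_closedBall_diff_kernel_le x (by omega) hs (by positivity))
    _ ≤ _ := by
        rw [← mul_add, ← ENNReal.ofReal_add (mul_nonneg (Real.rpow_nonneg (by linarith) _)
          hs.le) (by positivity)]
        gcongr
        rw [← hPs]
        nlinarith

theorem lintegral_kernel_le (hn : 4 ≤ n) :
    ∫⁻ y, ENNReal.ofReal (kernel n x y) ≤
      (volume : Measure (EuclideanSpace ℝ (Fin (n - 1)))).toSphere univ *
        ENNReal.ofReal ((96 * 4 ^ ((n : ℝ) - 3) + 2 / ((n : ℝ) - 3)) *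
          (1 + ‖x‖) ^ (3 - (n : ℝ))) := by
  set s := 1 + ‖x‖
  have hs : 0 < s := by positivity
  have hn' : (4 : ℝ) ≤ n := by exact_mod_cast hn
  have hnear : ∫⁻ y in closedBall 0 (2 * s), ENNReal.ofReal (kernel n x y) ≤
      (volume : Measure (EuclideanSpace ℝ (Fin (n - 1)))).toSphere univ *
        ENNReal.ofReal (96 * (s / 4) ^ (3 - (n : ℝ))) := by
    rcases le_total ‖x‖ 1 with hx | hx
    exacts [setLIntegral_closedBall_kernel_le_of_norm_le_one x hn hx,
      setLIntegral_closedBall_kernel_le_of_one_le_norm x hn hx]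
  have hfar := setLIntegral_compl_closedBall_kernel_le x hn (R := 2 * s) (by positivity)
    (by linarith)
  have hnear_eq : (s / 4) ^ (3 - (n : ℝ)) = 4 ^ ((n : ℝ) - 3) * s ^ (3 - (n : ℝ)) := by
    rw [Real.div_rpow hs.le (by norm_num), div_eq_mul_inv, ← Real.rpow_neg (by norm_num),
      neg_sub, mul_comm]
  have hfar_eq : 2 ^ ((n : ℝ) - 2) * (2 * s) ^ (3 - (n : ℝ)) = 2 * s ^ (3 - (n : ℝ)) := by
    rw [Real.mul_rpow zero_le_two hs.le, ← mul_assoc, ← Real.rpow_add two_pos,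
      show (n : ℝ) - 2 + (3 - n) = 1 by ring, Real.rpow_one]
  rw [← lintegral_add_compl _ (measurableSet_closedBall (x := 0) (ε := 2 * s))]
  calc _ ≤ _ := add_le_add hnear hfar
    _ = _ := by
        rw [← mul_add, ← ENNReal.ofReal_add (by positivity)
          (mul_nonneg (by positivity) (div_nonneg (by positivity) (by linarith))), hnear_eq,
          mul_div_assoc', hfar_eq]
        congr 2
        ring

end Phi0

/-- Decay of `φ₀`: there is `C > 0` with `|φ₀(x)| ≤ C/(1+|x|)^{n-3}` on the half-space
`ℝⁿ₊ = {x_n > 0}`. -/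
theorem phi0_decay (n : ℕ) (hn : 4 ≤ n) (ωn : ℝ) :
    ∃ C > 0, ∀ x : EuclideanSpace ℝ (Fin n), 0 < x ⟨n - 1, by omega⟩ →
      |phi0 n ωn x| ≤ C / (1 + ‖x‖) ^ ((n : ℝ) - 3) := by
  have hn' : (3 : ℝ) < n := by exact_mod_cast hn
  set M := ((volume : Measure (EuclideanSpace ℝ (Fin (n - 1)))).toSphere univ).toReal *
    (96 * 4 ^ ((n : ℝ) - 3) + 2 / ((n : ℝ) - 3))
  have hM : 0 ≤ M := mul_nonneg ENNReal.toReal_nonneg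
    (add_nonneg (by positivity) (div_nonneg zero_le_two (by linarith)))
  refine ⟨|alphaN n / ωn| * M + 1, by positivity, fun x _ => ?_⟩
  have hs : 0 < 1 + ‖x‖ := by positivity
  have hint : |∫ y, Phi0.kernel n x y| ≤ M * (1 + ‖x‖) ^ (3 - (n : ℝ)) := by
    refine (norm_integral_le_lintegral_norm (Phi0.kernel n x)).trans
      (ENNReal.toReal_le_of_le_ofReal (by positivity) ?_)
    simp_rw [Real.norm_eq_abs, abs_of_nonneg (Phi0.kernel_nonneg x _)]
    refine (Phi0.lintegral_kernel_le x hn).trans_eq ?_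
    rw [← ENNReal.ofReal_toReal (measure_ne_top _ univ), ← ENNReal.ofReal_mul
      ENNReal.toReal_nonneg, mul_assoc]
  calc |phi0 n ωn x| = |alphaN n / ωn| * |∫ y, Phi0.kernel n x y| := by
        rw [phi0, abs_mul, abs_neg]; rfl
    _ ≤ |alphaN n / ωn| * (M * (1 + ‖x‖) ^ (3 - (n : ℝ))) := by gcongr
    _ ≤ (|alphaN n / ωn| * M + 1) * (1 + ‖x‖) ^ (3 - (n : ℝ)) := by
        rw [← mul_assoc]; gcongr; linarith
    _ = _ := by rw [← neg_sub (n : ℝ) 3, Real.rpow_neg hs.le, ← div_eq_mul_inv]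
end
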